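/- arXiv:1303.4177 — 2 statements merged into one kernel-verified Lean document; each statement's English description precedes it below -/
import Mathlib

section
/- With parameters p = ⌈m / (log₂ m)²⌉ and s = ⌊log₂ m − 3·log₂ log₂ m⌋, the expression n·2^s/s + S/(2s) + m·p + ⌈m/p⌉ · 2^s · ⌈n/s⌉ is at most S/(2·log₂ m) + o((m+n)²/log m) as m, n → ∞ with S ≤ m·n·(2 log₂ m + 1). Concretely: for all ε > 0 there exists N such that for all m ≥ N and all n, S with S ≤ (m+n)², the expression is ≤ S/(2 log₂ m)·(1+ε) + ε·(m+n)²/log₂ m. -/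
/-!
Write `L = log₂ m`. Then `2^s ≤ 2^(L - 3 log₂ L) = m / L³`, and since `log₂ L ≤ 3√L` we get
`s ≥ L - 10√L`, so `s ≥ L / 2` and `L ≤ (1 + ε) s` once `ε√L ≥ 20`; this makes
`S / (2s) ≤ (1 + ε) S / (2L)`. As `⌈m/p⌉ ≤ L² + 1` and `⌈n/s⌉ ≤ 2n/L + 1`, the three other
terms are at most `m n / L³ + m² / L² + m + 4 m n / L² + 2 m / L`, which is `≤ ε (m + n)² / L`
as soon as `ε L ≥ 10` and `ε m ≥ 6 L`. Both follow from `√L ≥ 20` and `ε √L ≥ 20`, which hold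
for all large `m`.
-/

open Real Filter

lemma logb_two_le_three_mul_sqrt {x : ℝ} (hx : 0 ≤ x) : logb 2 x ≤ 3 * √x := by
  have hlog : log x ≤ 2 * √x :=
    calc log x ≤ x ^ (1 / 2 : ℝ) / (1 / 2) := log_le_rpow_div hx one_half_pos
      _ = 2 * √x := by rw [sqrt_eq_rpow]; ring
  rw [logb, div_le_iff₀ (log_pos one_lt_two)]
  nlinarith [log_two_gt_d9, sqrt_nonneg x]

lemma pow_floor_le_rpow {b t : ℝ} (hb : 1 ≤ b) (ht : 0 ≤ t) : b ^ ⌊t⌋₊ ≤ b ^ t := by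
  rw [← rpow_natCast]
  exact rpow_le_rpow_of_exponent_le hb (Nat.floor_le ht)

lemma rpow_logb_sub_three_mul_logb {b x y : ℝ} (hb : 0 < b) (hb1 : b ≠ 1) (hx : 0 < x)
    (hy : 0 < y) : b ^ (logb b x - 3 * logb b y) = x / y ^ 3 := by
  rw [rpow_sub hb, rpow_logb hb hb1 hx, mul_comm, rpow_mul hb.le, rpow_logb hb hb1 hy]
  norm_cast

lemma sub_ten_mul_sqrt_le_floor {L : ℝ} (hL : 1 ≤ L) :
    L - 10 * √L ≤ ⌊L - 3 * logb 2 L⌋₊ := by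
  have hlog := logb_two_le_three_mul_sqrt (zero_le_one.trans hL)
  have hfloor := Nat.sub_one_lt_floor (L - 3 * logb 2 L)
  have hsqrt : 1 ≤ √L := one_le_sqrt.2 hL
  linarith

lemma half_le_floor_sub_three_mul_logb {L : ℝ} (hL : 0 ≤ L) (h : 20 ≤ √L) :
    L / 2 ≤ ⌊L - 3 * logb 2 L⌋₊ := by
  have hs := sub_ten_mul_sqrt_le_floor (L := L) (by nlinarith [mul_self_sqrt hL])
  nlinarith [mul_self_sqrt hL]

lemma le_one_add_mul_floor_sub_three_mul_logb {L ε : ℝ} (hL : 0 ≤ L) (h : 20 ≤ √L)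
    (hε : 20 ≤ ε * √L) : L ≤ (1 + ε) * ⌊L - 3 * logb 2 L⌋₊ := by
  have hs := sub_ten_mul_sqrt_le_floor (L := L) (by nlinarith [mul_self_sqrt hL])
  have hεL : ε * L = ε * √L * √L := by rw [mul_assoc, mul_self_sqrt hL]
  have hε0 : 0 ≤ 1 + ε := by nlinarith
  calc L ≤ (1 + ε) * (L - 10 * √L) := by
        nlinarith [mul_self_sqrt hL, mul_nonneg (sub_nonneg.2 h) (sub_nonneg.2 hε)]
    _ ≤ (1 + ε) * ⌊L - 3 * logb 2 L⌋₊ := mul_le_mul_of_nonneg_left hs hε0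

lemma four_hundred_le_mul {L ε : ℝ} (hL : 0 ≤ L) (h : 20 ≤ √L) (hε : 20 ≤ ε * √L) :
    400 ≤ ε * L := by
  rw [← mul_self_sqrt hL, ← mul_assoc]; nlinarith

lemma six_mul_logb_le {x ε : ℝ} (hx : 0 ≤ x) (h : 20 ≤ √(logb 2 x))
    (hε : 20 ≤ ε * √(logb 2 x)) : 6 * logb 2 x ≤ ε * x := by
  have hL := logb_two_le_three_mul_sqrt hx
  have hL0 : 0 ≤ logb 2 x := (sqrt_pos.1 (by linarith)).le
  have hεL := four_hundred_le_mul hL0 h hε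
  have hε0 : 0 ≤ ε := by nlinarith [sqrt_nonneg (logb 2 x)]
  have hεx : 18 ≤ ε * √x := by nlinarith [mul_le_mul_of_nonneg_left hL hε0]
  calc 6 * logb 2 x ≤ 18 * √x := by linarith
    _ ≤ ε * √x * √x := mul_le_mul_of_nonneg_right hεx (sqrt_nonneg x)
    _ = ε * x := by rw [mul_assoc, mul_self_sqrt hx]

lemma ceil_div_ceil_div_lt {x q : ℝ} (hx : 0 < x) (hq : 0 < q) :
    (⌈x / ⌈x / q⌉₊⌉₊ : ℝ) < q + 1 := by
  have hc : x / q ≤ ⌈x / q⌉₊ := Nat.le_ceil _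
  have hc0 : 0 < (⌈x / q⌉₊ : ℝ) := (div_pos hx hq).trans_le hc
  have : x / ⌈x / q⌉₊ ≤ q := by
    rw [div_le_iff₀ hc0]; rw [div_le_iff₀ hq] at hc; linarith
  linarith [Nat.ceil_lt_add_one (div_pos hx hc0).le]

lemma error_terms_le {m n L ε : ℝ} (hm : 0 ≤ m) (hn : 0 ≤ n) (hL : 1 ≤ L) (hεL : 10 ≤ ε * L)
    (hεm : 6 * L ≤ ε * m) :
    n * (m / L ^ 3) + (m ^ 2 / L ^ 2 + m) + 2 * L ^ 2 * (m / L ^ 3) * (2 * n / L + 1)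
      ≤ ε * (m + n) ^ 2 / L := by
  have hL0 : 0 < L := by linarith
  have hε0 : 0 ≤ ε := by nlinarith
  have hmn : m * n / L ^ 3 ≤ m * n / L ^ 2 :=
    div_le_div_of_nonneg_left (by positivity) (by positivity) (by nlinarith)
  have h2m : 2 * m / L ≤ 2 * m := div_le_self (by positivity) hL
  have hquad : 5 * (m + n) ^ 2 / L ^ 2 ≤ ε * (m + n) ^ 2 / (2 * L) := by
    rw [div_le_div_iff₀ (by positivity) (by positivity)]
    nlinarith [mul_nonneg (sq_nonneg (m + n)) hL0.le]
  have hlin : 3 * m ≤ ε * (m + n) ^ 2 / (2 * L) := by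
    rw [le_div_iff₀ (by positivity)]
    nlinarith [mul_le_mul_of_nonneg_left hεm hm, mul_nonneg hε0 (mul_nonneg hm hn),
      mul_nonneg hε0 (sq_nonneg n)]
  have hsq : m ^ 2 / L ^ 2 + 5 * (m * n / L ^ 2) ≤ 5 * (m + n) ^ 2 / L ^ 2 := by
    rw [mul_div_assoc', ← add_div]; gcongr; nlinarith [mul_nonneg hm hn]
  calc n * (m / L ^ 3) + (m ^ 2 / L ^ 2 + m) + 2 * L ^ 2 * (m / L ^ 3) * (2 * n / L + 1)
      = m * n / L ^ 3 + m ^ 2 / L ^ 2 + 4 * (m * n / L ^ 2) + m + 2 * m / L := by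
        field_simp; ring
    _ ≤ ε * (m + n) ^ 2 / (2 * L) + ε * (m + n) ^ 2 / (2 * L) := by linarith
    _ = ε * (m + n) ^ 2 / L := by field_simp; ring

lemma balanced_cost_le {m n S ε L : ℝ} {s : ℕ} (hm : 0 < m) (hn : 0 ≤ n) (hS : 0 ≤ S)
    (hL : 1 ≤ L) (hs : L / 2 ≤ s) (hLs : L ≤ (1 + ε) * s) (h2s : (2 : ℝ) ^ s ≤ m / L ^ 3)
    (hεL : 10 ≤ ε * L) (hεm : 6 * L ≤ ε * m) :
    n * 2 ^ s / s + S / (2 * s) + m * ⌈m / L ^ 2⌉₊ + ⌈m / ⌈m / L ^ 2⌉₊⌉₊ * 2 ^ s * ⌈n / s⌉₊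
      ≤ S / (2 * L) * (1 + ε) + ε * (m + n) ^ 2 / L := by
  have hL0 : 0 < L := by linarith
  have hs0 : 0 < (s : ℝ) := by linarith
  have hs1 : 1 ≤ (s : ℝ) := Nat.one_le_cast.2 (Nat.cast_pos.1 hs0)
  have h1 : n * 2 ^ s / s ≤ n * (m / L ^ 3) :=
    (div_le_self (by positivity) hs1).trans (by gcongr)
  have h2 : S / (2 * s) ≤ S / (2 * L) * (1 + ε) := by
    rw [div_mul_eq_mul_div, div_le_div_iff₀ (by positivity) (by positivity)]
    nlinarith
  have h3 : m * ⌈m / L ^ 2⌉₊ ≤ m ^ 2 / L ^ 2 + m :=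
    calc m * ⌈m / L ^ 2⌉₊ ≤ m * (m / L ^ 2 + 1) := by
          gcongr; exact (Nat.ceil_lt_add_one (by positivity)).le
      _ = m ^ 2 / L ^ 2 + m := by ring
  have h4 : ⌈m / ⌈m / L ^ 2⌉₊⌉₊ * 2 ^ s * ⌈n / s⌉₊
      ≤ 2 * L ^ 2 * (m / L ^ 3) * (2 * n / L + 1) := by
    have hp : (⌈m / ⌈m / L ^ 2⌉₊⌉₊ : ℝ) ≤ 2 * L ^ 2 := by
      nlinarith [ceil_div_ceil_div_lt hm (by positivity : 0 < L ^ 2)]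
    have hns : n / s ≤ 2 * n / L := by
      rw [div_le_div_iff₀ hs0 hL0]; nlinarith
    have hq : (⌈n / s⌉₊ : ℝ) ≤ 2 * n / L + 1 := by
      linarith [Nat.ceil_lt_add_one (by positivity : 0 ≤ n / s)]
    gcongr
  linarith [error_terms_le hm.le hn hL hεL hεm]

lemma eventually_twenty_le_sqrt_logb {ε : ℝ} (hε : 0 < ε) :
    ∀ᶠ m : ℕ in atTop, 20 ≤ √(logb 2 m) ∧ 20 ≤ ε * √(logb 2 m) := by
  have h : Tendsto (fun m : ℕ => √(logb 2 m)) atTop atTop :=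
    tendsto_sqrt_atTop.comp ((tendsto_logb_atTop one_lt_two).comp tendsto_natCast_atTop_atTop)
  exact (h.eventually_ge_atTop 20).and ((h.const_mul_atTop hε).eventually_ge_atTop 20)

/-- The parameter-balancing estimate: with `p = ⌈m/(log₂ m)²⌉` and
`s = ⌊log₂ m − 3 log₂ log₂ m⌋`, the expression
`n·2^s/s + S/(2s) + m·p + ⌈m/p⌉·2^s·⌈n/s⌉` is `S/(2 log₂ m) + o((m+n)²/log m)`. -/
theorem stmt_12 :
    ∀ ε : ℝ, 0 < ε → ∃ N : ℕ, ∀ m : ℕ, N ≤ m → ∀ n : ℕ, 1 ≤ n → ∀ S : ℝ,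
      0 ≤ S → S ≤ ((m : ℝ) + n) ^ 2 →
      (let p : ℕ := ⌈(m : ℝ) / (Real.logb 2 m) ^ 2⌉₊
       let s : ℕ := ⌊Real.logb 2 m - 3 * Real.logb 2 (Real.logb 2 m)⌋₊
       (n : ℝ) * 2 ^ s / s + S / (2 * s) + (m : ℝ) * p
         + (⌈(m : ℝ) / p⌉₊ : ℝ) * 2 ^ s * (⌈(n : ℝ) / s⌉₊ : ℝ)) ≤
      S / (2 * Real.logb 2 m) * (1 + ε) + ε * ((m : ℝ) + n) ^ 2 / Real.logb 2 m := by
  intro ε hε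
  obtain ⟨N, hN⟩ :=
    eventually_atTop.1 ((eventually_twenty_le_sqrt_logb hε).and (eventually_gt_atTop 0))
  refine ⟨N, fun m hm n _ S hS _ => ?_⟩
  obtain ⟨⟨h, hεL⟩, hm0⟩ := hN m hm
  have hm : (0 : ℝ) < m := Nat.cast_pos.2 hm0
  set L := logb 2 (m : ℝ)
  have hL0 : 0 ≤ L := (sqrt_pos.1 (by linarith)).le
  have hL : 400 ≤ L := by nlinarith [mul_self_sqrt hL0]
  have h2s : (2 : ℝ) ^ ⌊L - 3 * logb 2 L⌋₊ ≤ m / L ^ 3 := by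
    rw [← rpow_logb_sub_three_mul_logb two_pos (by norm_num) hm (by linarith)]
    exact pow_floor_le_rpow one_le_two
      (by nlinarith [logb_two_le_three_mul_sqrt hL0, mul_self_sqrt hL0])
  exact balanced_cost_le hm n.cast_nonneg hS (by linarith)
    (half_le_floor_sub_three_mul_logb hL0 h) (le_one_add_mul_floor_sub_three_mul_logb hL0 h hεL) h2s
    (by linarith [four_hundred_le_mul hL0 h hεL]) (six_mul_logb_le hm.le h hεL)
end

section
/- In the pairing scheme: if within a p-row section each column's ones are paired greedily, then the number of sums y_{i,j} that are nonempty is at most min(w/2, p(p−1)/2) where w is the weight of the section, and each y_{i,j} is computable with (number of columns pairing i with j) − 1 XOR gates; summing over all pairs, the total gate count for all y_{i,j} in the section is at most w/2. -/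
/-- `kPair P e` : the number of columns in which `e` is one of the chosen pairs. -/
def kPair (p q : ℕ) (P : Fin q → Finset (Finset (Fin p))) (e : Finset (Fin p)) : ℕ :=
  (Finset.univ.filter (fun c : Fin q => e ∈ P c)).card

/-!
Double counting the incidences "pair `e` is chosen in column `c`" gives `Σₑ kₑ = Σ_c |P c|`, and
the disjoint pairs of column `c` cover `2 |P c|` of its ones, so `2 Σₑ kₑ ≤ w`. The gate count is
a pointwise identity `(k - 1) + [k ≥ 1] = k`, and a nonempty `y_e` is indexed by a 2-subset of
the rows, whence at most `min (w / 2) (p choose 2)` of them.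
-/

open Finset

theorem tsub_one_max_zero_add_ite_one_le (n : ℕ) :
    max (n - 1) 0 + (if 1 ≤ n then 1 else 0) = n := by
  split_ifs <;> omega

theorem sum_tsub_one_max_zero_add_card_filter_one_le {ι : Type*} (s : Finset ι) (f : ι → ℕ) :
    ∑ i ∈ s, max (f i - 1) 0 + #{i ∈ s | 1 ≤ f i} = ∑ i ∈ s, f i := by
  rw [card_filter, ← sum_add_distrib]
  exact sum_congr rfl fun i _ => tsub_one_max_zero_add_ite_one_le (f i)

theorem card_filter_prod_eq_sum_card_filter {α β : Type*} [Fintype α] [Fintype β]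
    (r : α → β → Prop) [∀ a b, Decidable (r a b)] :
    #{u : α × β | r u.1 u.2} = ∑ b, #{a | r a b} := by
  rw [card_filter, Fintype.sum_prod_type, sum_comm]
  exact sum_congr rfl fun b _ => (card_filter _ _).symm

theorem mul_card_le_card_of_pairwiseDisjoint {α : Type*} [DecidableEq α]
    {P : Finset (Finset α)} {S : Finset α} {m : ℕ} (hcard : ∀ e ∈ P, #e = m)
    (hsub : ∀ e ∈ P, e ⊆ S) (hdisj : (P : Set (Finset α)).PairwiseDisjoint id) :
    m * #P ≤ #S := calc
  m * #P = #(P.biUnion id) := by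
    rw [card_biUnion hdisj, mul_comm]; exact (sum_const_nat hcard).symm
  _ ≤ #S := card_le_card (biUnion_subset.2 hsub)

section Pairing

variable {p q : ℕ} (P : Fin q → Finset (Finset (Fin p)))

theorem sum_kPair_eq_sum_card : ∑ e, kPair p q P e = ∑ c, #(P c) := by
  simpa [bipartiteAbove, bipartiteBelow, kPair] using
    sum_card_bipartiteAbove_eq_sum_card_bipartiteBelow (fun e c => e ∈ P c)
      (s := univ) (t := univ)

theorem one_le_kPair_iff {e : Finset (Fin p)} : 1 ≤ kPair p q P e ↔ ∃ c, e ∈ P c := by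
  simp [kPair, Nat.one_le_iff_ne_zero, filter_eq_empty_iff]

theorem card_filter_one_le_kPair_le_choose (hcard : ∀ c, ∀ e ∈ P c, #e = 2) :
    #{e | 1 ≤ kPair p q P e} ≤ p.choose 2 := by
  calc #{e | 1 ≤ kPair p q P e}
      ≤ #(powersetCard 2 (univ : Finset (Fin p))) := by
        refine card_le_card fun e he => ?_
        obtain ⟨c, hc⟩ := (one_le_kPair_iff P).1 (mem_filter.1 he).2
        exact mem_powersetCard.2 ⟨subset_univ e, hcard c e hc⟩
    _ = p.choose 2 := by simp

end Pairing

theorem stmt_15 (p q : ℕ) (B : Fin p → Fin q → Bool)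
    (P : Fin q → Finset (Finset (Fin p)))
    (hpair : ∀ (c : Fin q), ∀ e ∈ P c,
      e.card = 2 ∧ e ⊆ Finset.univ.filter (fun i : Fin p => B i c = true))
    (hdisj : ∀ c : Fin q, ((P c : Set (Finset (Fin p)))).PairwiseDisjoint id) :
    -- the number of nonempty sums y_{i,j} is at most min(w/2, p(p-1)/2):
    (Finset.univ.filter (fun e : Finset (Fin p) => 1 ≤ kPair p q P e)).card ≤
      min ((Finset.univ.filter (fun u : Fin p × Fin q => B u.1 u.2 = true)).card / 2)
        (p * (p - 1) / 2) ∧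
    -- gates for the y's plus the additions of the y's into rows are at most Σ k_{i,j}:
    (∑ e : Finset (Fin p), max (kPair p q P e - 1) 0) +
      (Finset.univ.filter (fun e : Finset (Fin p) => 1 ≤ kPair p q P e)).card ≤
      ∑ e : Finset (Fin p), kPair p q P e ∧
    -- and twice the number of pairings is at most the weight of the section:
    2 * (∑ e : Finset (Fin p), kPair p q P e) ≤
      (Finset.univ.filter (fun u : Fin p × Fin q => B u.1 u.2 = true)).card := by
  have hgates := sum_tsub_one_max_zero_add_card_filter_one_le univ (kPair p q P)
  have hweight : 2 * ∑ e, kPair p q P e ≤ #{u : Fin p × Fin q | B u.1 u.2 = true} := by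
    rw [sum_kPair_eq_sum_card, mul_sum,
      card_filter_prod_eq_sum_card_filter fun i c => B i c = true]
    exact sum_le_sum fun c _ => mul_card_le_card_of_pairwiseDisjoint
      (fun e he => (hpair c e he).1) (fun e he => (hpair c e he).2) (hdisj c)
  refine ⟨le_min (by omega) ?_, hgates.le, hweight⟩
  rw [← Nat.choose_two_right]
  exact card_filter_one_le_kPair_le_choose P fun c e he => (hpair c e he).1
end
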